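/- arXiv:2502.01889 — 3 statements merged into one kernel-verified Lean document; each statement's English description precedes it below -/
import Mathlib

section
/- Let P, Q be probability measures on ℝ^d, let F and G be nonempty sets of functions ℝ^d → ℝ with every g ∈ G differentiable, let τ : ℝ^d → ℝ, and let 0 ≤ λ₁ < λ₂. Suppose (f₁, g₁) ∈ F × G is a saddle point of (f,g) ↦ V_{P,Q}(f,g) + λ₁ s_τ(g) on F × G, and (f₂, g₂) ∈ F × G is a saddle point of (f,g) ↦ V_{P,Q}(f,g) + λ₂ s_τ(g) on F × G; that is, for i = 1,2: V_{P,Q}(f, gᵢ) + λᵢ s_τ(gᵢ) ≤ V_{P,Q}(fᵢ, gᵢ) + λᵢ s_τ(gᵢ) for all f ∈ F, and V_{P,Q}(fᵢ, gᵢ) + λᵢ s_τ(gᵢ) ≤ V_{P,Q}(fᵢ, g) + λᵢ s_τ(g) for all g ∈ G. Then s_τ(g₁) ≥ s_τ(g₂): the sparsity penalty of the optimal potential is non-increasing in the regularization intensity λ. -/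
/-!
Read each saddle point as one inequality `Lᵢ(f, gᵢ) ≤ Lᵢ(fᵢ, g)` (Mathlib's `IsSaddlePointOn`, with
the minimised variable `g` first). Testing the `λ₁`-saddle point against
`(f₂, g₂)` and the `λ₂`-saddle point against `(f₁, g₁)` and adding the two inequalities, the
cross values `V(f₂, g₁)` and `V(f₁, g₂)` cancel and leave `(λ₂ - λ₁) (s(g₂) - s(g₁)) ≤ 0`.
-/

open MeasureTheory
open scoped RealInnerProductSpace

/-- The minimax dual objective `V_{P,Q}(f,g)` of Makkuva et al., used in the paper. -/
noncomputable def VPQ {d : ℕ} (P Q : Measure (EuclideanSpace ℝ (Fin d)))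
    (f g : EuclideanSpace ℝ (Fin d) → ℝ) : ℝ :=
  -∫ x, f x ∂P - ∫ y, (⟪y, gradient g y⟫ - f (gradient g y)) ∂Q

/-- The sparsity functional `s_τ(g) = ∫ τ(∇g(y) − y) dQ(y)`. -/
noncomputable def sPen {d : ℕ} (Q : Measure (EuclideanSpace ℝ (Fin d)))
    (τ : EuclideanSpace ℝ (Fin d) → ℝ) (g : EuclideanSpace ℝ (Fin d) → ℝ) : ℝ :=
  ∫ y, τ (gradient g y - y) ∂Q

theorem isSaddlePointOn_of_le_of_le {E F β : Type*} [Preorder β] {X : Set E} {Y : Set F}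
    {f : E → F → β} {a : E} {b : F} (hmax : ∀ y ∈ Y, f a y ≤ f a b)
    (hmin : ∀ x ∈ X, f a b ≤ f x b) : IsSaddlePointOn X Y f a b :=
  fun x hx y hy ↦ (hmax y hy).trans (hmin x hx)

theorem IsSaddlePointOn.penalty_le_of_lt {R E F : Type*} [CommRing R] [LinearOrder R]
    [IsStrictOrderedRing R] {X : Set E} {Y : Set F} {V : E → F → R} {s : E → R}
    {μ₁ μ₂ : R} {a₁ a₂ : E} {b₁ b₂ : F} (ha₁ : a₁ ∈ X) (ha₂ : a₂ ∈ X) (hb₁ : b₁ ∈ Y)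
    (hb₂ : b₂ ∈ Y) (hμ : μ₁ < μ₂)
    (h₁ : IsSaddlePointOn X Y (fun a b ↦ V a b + μ₁ * s a) a₁ b₁)
    (h₂ : IsSaddlePointOn X Y (fun a b ↦ V a b + μ₂ * s a) a₂ b₂) :
    s a₂ ≤ s a₁ := by
  have key : (μ₂ - μ₁) * (s a₂ - s a₁) ≤ 0 := by
    linear_combination h₁ a₂ ha₂ b₂ hb₂ + h₂ a₁ ha₁ b₁ hb₁
  exact sub_nonpos.mp (nonpos_of_mul_nonpos_right key (sub_pos.mpr hμ))

theorem sparsity_monotone_general {d : ℕ} (P Q : Measure (EuclideanSpace ℝ (Fin d)))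
    (F G : Set (EuclideanSpace ℝ (Fin d) → ℝ))
    (τ : EuclideanSpace ℝ (Fin d) → ℝ)
    (lam₁ lam₂ : ℝ) (hlam : lam₁ < lam₂)
    (f₁ g₁ f₂ g₂ : EuclideanSpace ℝ (Fin d) → ℝ)
    (hf₁ : f₁ ∈ F) (hg₁ : g₁ ∈ G) (hf₂ : f₂ ∈ F) (hg₂ : g₂ ∈ G)
    (hsaddle₁f : ∀ f ∈ F, VPQ P Q f g₁ + lam₁ * sPen Q τ g₁
      ≤ VPQ P Q f₁ g₁ + lam₁ * sPen Q τ g₁)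
    (hsaddle₁g : ∀ g ∈ G, VPQ P Q f₁ g₁ + lam₁ * sPen Q τ g₁
      ≤ VPQ P Q f₁ g + lam₁ * sPen Q τ g)
    (hsaddle₂f : ∀ f ∈ F, VPQ P Q f g₂ + lam₂ * sPen Q τ g₂
      ≤ VPQ P Q f₂ g₂ + lam₂ * sPen Q τ g₂)
    (hsaddle₂g : ∀ g ∈ G, VPQ P Q f₂ g₂ + lam₂ * sPen Q τ g₂
      ≤ VPQ P Q f₂ g + lam₂ * sPen Q τ g) :
    sPen Q τ g₂ ≤ sPen Q τ g₁ :=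
  IsSaddlePointOn.penalty_le_of_lt (V := fun g f ↦ VPQ P Q f g) hg₁ hg₂ hf₁ hf₂ hlam
    (isSaddlePointOn_of_le_of_le hsaddle₁f hsaddle₁g)
    (isSaddlePointOn_of_le_of_le hsaddle₂f hsaddle₂g)

/-- Theorem 4.5 of the paper: if `(f₁,g₁)` and `(f₂,g₂)` are saddle points of the
regularized objective for intensities `0 ≤ λ₁ < λ₂`, then `s_τ(g₁) ≥ s_τ(g₂)`:
the sparsity penalty of the optimal potential is non-increasing in `λ`. -/
theorem sparsity_monotone {d : ℕ} (P Q : Measure (EuclideanSpace ℝ (Fin d)))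
    [IsProbabilityMeasure P] [IsProbabilityMeasure Q]
    (F G : Set (EuclideanSpace ℝ (Fin d) → ℝ)) (hF : F.Nonempty) (hG : G.Nonempty)
    (hGdiff : ∀ g ∈ G, Differentiable ℝ g)
    (τ : EuclideanSpace ℝ (Fin d) → ℝ)
    (lam₁ lam₂ : ℝ) (hlam₁ : 0 ≤ lam₁) (hlam : lam₁ < lam₂)
    (f₁ g₁ f₂ g₂ : EuclideanSpace ℝ (Fin d) → ℝ)
    (hf₁ : f₁ ∈ F) (hg₁ : g₁ ∈ G) (hf₂ : f₂ ∈ F) (hg₂ : g₂ ∈ G)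
    (hsaddle₁f : ∀ f ∈ F, VPQ P Q f g₁ + lam₁ * sPen Q τ g₁
      ≤ VPQ P Q f₁ g₁ + lam₁ * sPen Q τ g₁)
    (hsaddle₁g : ∀ g ∈ G, VPQ P Q f₁ g₁ + lam₁ * sPen Q τ g₁
      ≤ VPQ P Q f₁ g + lam₁ * sPen Q τ g)
    (hsaddle₂f : ∀ f ∈ F, VPQ P Q f g₂ + lam₂ * sPen Q τ g₂
      ≤ VPQ P Q f₂ g₂ + lam₂ * sPen Q τ g₂)
    (hsaddle₂g : ∀ g ∈ G, VPQ P Q f₂ g₂ + lam₂ * sPen Q τ g₂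
      ≤ VPQ P Q f₂ g + lam₂ * sPen Q τ g) :
    sPen Q τ g₂ ≤ sPen Q τ g₁ :=
  sparsity_monotone_general P Q F G τ lam₁ lam₂ hlam f₁ g₁ f₂ g₂ hf₁ hg₁ hf₂ hg₂ hsaddle₁f hsaddle₁g
    hsaddle₂f hsaddle₂g
end

section
/- Let P, Q be probability measures on ℝ^d, let G be a nonempty set of differentiable functions ℝ^d → ℝ, let τ : ℝ^d → ℝ satisfy 0 ≤ s_τ(g') ≤ M for all g' ∈ G, let λ ≥ 0 and α > 0. Let f, f₀, f_λ : ℝ^d → ℝ, let g, g₀, g_λ ∈ G, and assume g' ↦ V_{P,Q}(f,g') is bounded below on G. Define ε̂₁ = V_{P,Q}(f,g) − inf_{g'∈G} V_{P,Q}(f,g'), ε̂₂ = V_{P,Q}(f₀,g₀) − inf_{g'∈G} V_{P,Q}(f,g'), ε₁ = N_λ(f,g) − inf_{g'∈G} N_λ(f,g'), and ε₂ = N_λ(f_λ,g_λ) − inf_{g'∈G} N_λ(f,g'), where N_λ(f,g) = V_{P,Q}(f,g) + λ s_τ(g). Assume: (i) the strong-convexity map-error bound ∫ ‖∇g(y)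 − ∇g₀(y)‖² dQ(y) ≤ (2/α)(ε̂₁ + ε̂₂) holds (this is the cited bound valid when f is α-strongly convex), and (ii) V_{P,Q}(f₀,g₀) ≤ V_{P,Q}(f_λ,g_λ) + λ s_τ(g_λ). Then ∫ ‖∇g(y) − ∇g₀(y)‖² dQ(y) ≤ (2/α)( ε₁ + ε₂ + 2λM ). -/
open MeasureTheory
open scoped RealInnerProductSpace

/-!
Adding the penalty `λ s_τ`, which takes values in `[0, λM]` on `G`, raises the infimum of the
objective by at most `λM`. Hence each unregularized gap `ε̂ᵢ` is at most the regularized gap `εᵢ`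
plus `λM` (for `ε̂₂` through hypothesis (ii)), and the cited bound (i) gives the claim.
-/

theorem ciInf_add_le_ciInf_add_of_le {ι : Type*} [Nonempty ι] {u v : ι → ℝ} {M : ℝ}
    (hu : BddBelow (Set.range u)) (hv₀ : ∀ i, 0 ≤ v i) (hvM : ∀ i, v i ≤ M) :
    ⨅ i, (u i + v i) ≤ (⨅ i, u i) + M := by
  obtain ⟨c, hc⟩ := hu
  have hbdd : BddBelow (Set.range fun i => u i + v i) :=
    ⟨c, by rintro _ ⟨i, rfl⟩; linarith [hc ⟨i, rfl⟩, hv₀ i]⟩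
  rw [← sub_le_iff_le_add]
  exact le_ciInf fun i => by linarith [ciInf_le hbdd i, hvM i]

theorem map_error_bound_general {d : ℕ} (P Q : Measure (EuclideanSpace ℝ (Fin d)))
    (G : Set (EuclideanSpace ℝ (Fin d) → ℝ))
    (τ : EuclideanSpace ℝ (Fin d) → ℝ) (M : ℝ)
    (hs : ∀ g' ∈ G, 0 ≤ sPen Q τ g' ∧ sPen Q τ g' ≤ M)
    (lam : ℝ) (hlam : 0 ≤ lam) (α : ℝ) (hα : 0 < α)
    (f f₀ flam : EuclideanSpace ℝ (Fin d) → ℝ)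
    (g g₀ glam : EuclideanSpace ℝ (Fin d) → ℝ)
    (hg : g ∈ G)
    (hbb : BddBelow (Set.range fun g' : G => VPQ P Q f g'.1))
    -- (i) the cited strong-convexity map-error bound of Makkuva et al. (valid when `f` is
    -- `α`-strongly convex), in terms of the unregularized optimality gaps `ε̂₁, ε̂₂`:
    (hMakkuva : ∫ y, ‖gradient g y - gradient g₀ y‖ ^ 2 ∂Q
      ≤ (2 / α) * ((VPQ P Q f g - ⨅ g' : G, VPQ P Q f g'.1)
          + (VPQ P Q f₀ g₀ - ⨅ g' : G, VPQ P Q f g'.1)))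
    -- (ii) the regularized optimum dominates the unregularized one:
    (hJ : VPQ P Q f₀ g₀ ≤ VPQ P Q flam glam + lam * sPen Q τ glam) :
    ∫ y, ‖gradient g y - gradient g₀ y‖ ^ 2 ∂Q
      ≤ (2 / α) * (((VPQ P Q f g + lam * sPen Q τ g)
            - ⨅ g' : G, (VPQ P Q f g'.1 + lam * sPen Q τ g'.1))
          + ((VPQ P Q flam glam + lam * sPen Q τ glam)
            - ⨅ g' : G, (VPQ P Q f g'.1 + lam * sPen Q τ g'.1))
          + 2 * lam * M) := by
  have : Nonempty G := ⟨⟨g, hg⟩⟩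
  have hinf := ciInf_add_le_ciInf_add_of_le hbb
    (fun g' : G => mul_nonneg hlam (hs _ g'.2).1)
    (fun g' : G => mul_le_mul_of_nonneg_left (hs _ g'.2).2 hlam)
  have hpen_g : 0 ≤ lam * sPen Q τ g := mul_nonneg hlam (hs g hg).1
  refine hMakkuva.trans (mul_le_mul_of_nonneg_left ?_ (by positivity))
  linarith

/-- Theorem 4.6 of the paper: the squared `L²(Q)` deviation of the biased map `∇g` from the
unbiased ground-truth map `∇g₀` is bounded by `(2/α)(ε₁ + ε₂ + 2λM)`, given the
strong-convexity map-error bound of Makkuva et al. in terms of the unregularized gaps. -/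
theorem map_error_bound {d : ℕ} (P Q : Measure (EuclideanSpace ℝ (Fin d)))
    [IsProbabilityMeasure P] [IsProbabilityMeasure Q]
    (G : Set (EuclideanSpace ℝ (Fin d) → ℝ)) (hG : G.Nonempty)
    (hGdiff : ∀ g' ∈ G, Differentiable ℝ g')
    (τ : EuclideanSpace ℝ (Fin d) → ℝ) (M : ℝ)
    (hs : ∀ g' ∈ G, 0 ≤ sPen Q τ g' ∧ sPen Q τ g' ≤ M)
    (lam : ℝ) (hlam : 0 ≤ lam) (α : ℝ) (hα : 0 < α)
    (f f₀ flam : EuclideanSpace ℝ (Fin d) → ℝ)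
    (g g₀ glam : EuclideanSpace ℝ (Fin d) → ℝ)
    (hg : g ∈ G) (hg₀ : g₀ ∈ G) (hglam : glam ∈ G)
    (hbb : BddBelow (Set.range fun g' : G => VPQ P Q f g'.1))
    -- (i) the cited strong-convexity map-error bound of Makkuva et al. (valid when `f` is
    -- `α`-strongly convex), in terms of the unregularized optimality gaps `ε̂₁, ε̂₂`:
    (hMakkuva : ∫ y, ‖gradient g y - gradient g₀ y‖ ^ 2 ∂Q
      ≤ (2 / α) * ((VPQ P Q f g - ⨅ g' : G, VPQ P Q f g'.1)
          + (VPQ P Q f₀ g₀ - ⨅ g' : G, VPQ P Q f g'.1)))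
    -- (ii) the regularized optimum dominates the unregularized one:
    (hJ : VPQ P Q f₀ g₀ ≤ VPQ P Q flam glam + lam * sPen Q τ glam) :
    ∫ y, ‖gradient g y - gradient g₀ y‖ ^ 2 ∂Q
      ≤ (2 / α) * (((VPQ P Q f g + lam * sPen Q τ g)
            - ⨅ g' : G, (VPQ P Q f g'.1 + lam * sPen Q τ g'.1))
          + ((VPQ P Q flam glam + lam * sPen Q τ glam)
            - ⨅ g' : G, (VPQ P Q f g'.1 + lam * sPen Q τ g'.1))
          + 2 * lam * M) :=
  map_error_bound_general P Q G τ M hs lam hlam α hα f f₀ flam g g₀ glam hg hbb hMakkuva hJ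
end

section
/- Let P and Q be probability measures on ℝ^d with supports contained in the closed balls of radius R_P and R_Q (respectively) centered at the origin, and let L ≥ 0. Let f_n, f : ℝ^d → ℝ be L-Lipschitz and let g_n, g : ℝ^d → ℝ be differentiable with ‖∇g_n(y)‖ ≤ L and ‖∇g(y)‖ ≤ L for all y in the support of Q, with ∇g_n and ∇g measurable. Assume f_n → f uniformly on the closed ball of radius max(R_P, L) centered at the origin, and ∇g_n → ∇g uniformly on the support of Q. Then V_{P,Q}(f_n, g_n) → V_{P,Q}(f, g). -/
/-!
Both integrands converge uniformly on the supports of `P` and `Q`, which carry full measure,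
and their limits are bounded there, so dominated convergence with a constant bound applies.
The second integrand is `Φₙ (y, ∇gₙ y)` with `Φₙ (y, v) = ⟪y, v⟫ - fₙ v`; here `Φₙ → Φ`
uniformly on the compact set `B(0, R_Q) × B(0, max R_P L)`, on which `Φ` is uniformly
continuous, and `(y, ∇gₙ y) → (y, ∇g y)` uniformly on the support of `Q` without leaving
that set.
-/

open MeasureTheory Filter Metric
open scoped RealInnerProductSpace

/-- The (topological) support of a measure: the set of points all of whose neighborhoods
have positive measure. -/
def msupport {d : ℕ} (μ : Measure (EuclideanSpace ℝ (Fin d))) :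
    Set (EuclideanSpace ℝ (Fin d)) :=
  {x | ∀ U ∈ nhds x, μ U ≠ 0}

open Set Topology

theorem msupport_eq_support {d : ℕ} (μ : Measure (EuclideanSpace ℝ (Fin d))) :
    msupport μ = μ.support := by
  ext x
  simp [msupport, Measure.mem_support_iff_forall, pos_iff_ne_zero]

theorem ae_mem_msupport {d : ℕ} (μ : Measure (EuclideanSpace ℝ (Fin d))) :
    ∀ᵐ x ∂μ, x ∈ msupport μ :=
  msupport_eq_support μ ▸ Measure.support_mem_ae

section UniformConvergence

variable {ι α β γ : Type*} {p : Filter ι}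

theorem TendstoUniformlyOn.id_prodMk [UniformSpace α] [UniformSpace β]
    {G : ι → α → β} {g : α → β} {s : Set α} (h : TendstoUniformlyOn G g p s) :
    TendstoUniformlyOn (fun i x => (x, G i x)) (fun x => (x, g x)) p s := fun u hu =>
  ((show TendstoUniformlyOn (fun (_ : ι) x => x) id p s from
    fun _ hv => .of_forall fun _ _ _ => refl_mem_uniformity hv).prodMk h u hu).diag_of_prod

theorem TendstoUniformlyOn.comp_tendstoUniformlyOn_of_mapsTo [PseudoMetricSpace β]
    [PseudoMetricSpace γ] {Φ : ι → β → γ} {φ : β → γ} {K : Set β}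
    {H : ι → α → β} {h : α → β} {s : Set α} (hΦ : TendstoUniformlyOn Φ φ p K)
    (hφ : UniformContinuousOn φ K) (hH : TendstoUniformlyOn H h p s)
    (hHK : ∀ᶠ i in p, MapsTo (H i) s K) (hhK : MapsTo h s K) :
    TendstoUniformlyOn (fun i x => Φ i (H i x)) (fun x => φ (h x)) p s := by
  rw [Metric.tendstoUniformlyOn_iff] at hΦ hH ⊢
  intro ε hε
  obtain ⟨δ, hδ, hφδ⟩ := Metric.uniformContinuousOn_iff.1 hφ (ε / 2) (half_pos hε)
  filter_upwards [hΦ (ε / 2) (half_pos hε), hH δ hδ, hHK] with i hΦi hHi hHKi x hx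
  calc dist (φ (h x)) (Φ i (H i x))
      ≤ dist (φ (h x)) (φ (H i x)) + dist (φ (H i x)) (Φ i (H i x)) := dist_triangle _ _ _
    _ < ε / 2 + ε / 2 :=
      add_lt_add (hφδ _ (hhK hx) _ (hHKi hx) (hHi x hx)) (hΦi _ (hHKi hx))
    _ = ε := add_halves ε

end UniformConvergence

theorem TendstoUniformlyOn.tendsto_integral {ι α E : Type*} [MeasurableSpace α]
    [NormedAddCommGroup E] [NormedSpace ℝ E] {μ : Measure α} [IsFiniteMeasure μ]
    {l : Filter ι} [l.IsCountablyGenerated] {F : ι → α → E} {f : α → E} {s : Set α}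
    {C : ℝ} (h : TendstoUniformlyOn F f l s) (hF : ∀ᶠ i in l, AEStronglyMeasurable (F i) μ)
    (hs : ∀ᵐ x ∂μ, x ∈ s) (hfC : ∀ x ∈ s, ‖f x‖ ≤ C) :
    Tendsto (fun i => ∫ x, F i x ∂μ) l (𝓝 (∫ x, f x ∂μ)) := by
  refine tendsto_integral_filter_of_dominated_convergence (fun _ => C + 1) hF ?_
    (integrable_const _) (hs.mono fun x hx => h.tendsto_at hx)
  filter_upwards [(uniformContinuous_norm.comp_tendstoUniformlyOn h).eventually_forall_le
    (lt_add_one C) hfC] with i hi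
  exact hs.mono fun x hx => hi x hx

theorem tendsto_integral_inner_sub_comp {E : Type*} [NormedAddCommGroup E]
    [InnerProductSpace ℝ E] [FiniteDimensional ℝ E] [MeasurableSpace E] [BorelSpace E]
    {μ : Measure E} [IsFiniteMeasure μ] {s : Set E} {R r : ℝ}
    (hs : ∀ᵐ y ∂μ, y ∈ s) (hsR : s ⊆ closedBall 0 R)
    {fn : ℕ → E → ℝ} {f : E → ℝ} (hfn : ∀ n, Continuous (fn n)) (hf : Continuous f)
    (hfu : TendstoUniformlyOn fn f atTop (closedBall 0 r))
    {Gn : ℕ → E → E} {G : E → E} (hGn : ∀ n, Measurable (Gn n))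
    (hGnr : ∀ n, MapsTo (Gn n) s (closedBall 0 r)) (hGr : MapsTo G s (closedBall 0 r))
    (hGu : TendstoUniformlyOn Gn G atTop s) :
    Tendsto (fun n => ∫ y, (⟪y, Gn n y⟫ - fn n (Gn n y)) ∂μ) atTop
      (𝓝 (∫ y, (⟪y, G y⟫ - f (G y)) ∂μ)) := by
  set K : Set (E × E) := closedBall 0 R ×ˢ closedBall 0 r
  have hK : IsCompact K := (isCompact_closedBall _ _).prod (isCompact_closedBall _ _)
  have hΦ : TendstoUniformlyOn (fun n q => ⟪q.1, q.2⟫ - fn n q.2)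
      (fun q => ⟪q.1, q.2⟫ - f q.2) atTop K := by
    rw [Metric.tendstoUniformlyOn_iff] at hfu ⊢
    intro ε hε
    filter_upwards [hfu ε hε] with n hn q hq
    simpa only [dist_sub_left] using hn q.2 hq.2
  have hφ : ContinuousOn (fun q : E × E => ⟪q.1, q.2⟫ - f q.2) K := by fun_prop
  have hmaps : ∀ H : E → E, MapsTo H s (closedBall 0 r) → MapsTo (fun y => (y, H y)) s K :=
    fun H hH y hy => ⟨hsR hy, hH hy⟩
  obtain ⟨C, hC⟩ := hK.exists_bound_of_continuousOn hφ
  refine (hΦ.comp_tendstoUniformlyOn_of_mapsTo (hK.uniformContinuousOn_of_continuous hφ)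
    hGu.id_prodMk (.of_forall fun n => hmaps _ (hGnr n)) (hmaps _ hGr)).tendsto_integral
    (.of_forall fun n => ?_) hs fun y hy => hC _ (hmaps _ hGr hy)
  have := hfn n
  exact (by fun_prop : Continuous fun q : E × E => ⟪q.1, q.2⟫ - fn n q.2).measurable.comp
    (measurable_id.prodMk (hGn n)) |>.aestronglyMeasurable

theorem VPQ_continuous_general {d : ℕ} (P Q : Measure (EuclideanSpace ℝ (Fin d)))
    [IsProbabilityMeasure P] [IsProbabilityMeasure Q]
    (RP RQ : ℝ)
    (hPsupp : msupport P ⊆ closedBall (0 : EuclideanSpace ℝ (Fin d)) RP)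
    (hQsupp : msupport Q ⊆ closedBall (0 : EuclideanSpace ℝ (Fin d)) RQ)
    (L : ℝ)
    (fn : ℕ → EuclideanSpace ℝ (Fin d) → ℝ) (f : EuclideanSpace ℝ (Fin d) → ℝ)
    (hfnLip : ∀ n, LipschitzWith (Real.toNNReal L) (fn n))
    (hfLip : LipschitzWith (Real.toNNReal L) f)
    (gn : ℕ → EuclideanSpace ℝ (Fin d) → ℝ) (g : EuclideanSpace ℝ (Fin d) → ℝ)
    (hgnb : ∀ n, ∀ y ∈ msupport Q, ‖gradient (gn n) y‖ ≤ L)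
    (hgb : ∀ y ∈ msupport Q, ‖gradient g y‖ ≤ L)
    (hgnm : ∀ n, Measurable (fun y => gradient (gn n) y))
    (hfu : TendstoUniformlyOn fn f atTop
      (closedBall (0 : EuclideanSpace ℝ (Fin d)) (max RP L)))
    (hgu : TendstoUniformlyOn (fun n y => gradient (gn n) y)
      (fun y => gradient g y) atTop (msupport Q)) :
    Tendsto (fun n => VPQ P Q (fn n) (gn n)) atTop (nhds (VPQ P Q f g)) := by
  have hP : Tendsto (fun n => ∫ x, fn n x ∂P) atTop (𝓝 (∫ x, f x ∂P)) := by
    obtain ⟨C, hC⟩ := (isCompact_closedBall (0 : EuclideanSpace ℝ (Fin d)) RP)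
      |>.exists_bound_of_continuousOn hfLip.continuous.continuousOn
    have hPB := hPsupp.trans (closedBall_subset_closedBall (le_max_left RP L))
    exact (hfu.mono hPB).tendsto_integral
      (.of_forall fun n => (hfnLip n).continuous.aestronglyMeasurable) (ae_mem_msupport P)
      fun x hx => hC x (hPsupp hx)
  have hmaps : ∀ G : EuclideanSpace ℝ (Fin d) → EuclideanSpace ℝ (Fin d),
      (∀ y ∈ msupport Q, ‖G y‖ ≤ L) → MapsTo G (msupport Q) (closedBall 0 (max RP L)) :=
    fun G hG y hy => mem_closedBall_zero_iff.2 ((hG y hy).trans (le_max_right _ _))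
  have hQ := tendsto_integral_inner_sub_comp (ae_mem_msupport Q) hQsupp
    (fun n => (hfnLip n).continuous) hfLip.continuous hfu hgnm
    (fun n => hmaps _ (hgnb n)) (hmaps _ hgb) hgu
  simpa only [VPQ] using hP.neg.sub hQ

/-- Continuity part of Lemma A.2 of the paper: `V_{P,Q}` is continuous with respect to
uniform convergence of `(f,g)` on the class of `L`-Lipschitz potentials when `P` and `Q`
have bounded support. -/
theorem VPQ_continuous {d : ℕ} (P Q : Measure (EuclideanSpace ℝ (Fin d)))
    [IsProbabilityMeasure P] [IsProbabilityMeasure Q]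
    (RP RQ : ℝ) (hRP : 0 ≤ RP) (hRQ : 0 ≤ RQ)
    (hPsupp : msupport P ⊆ closedBall (0 : EuclideanSpace ℝ (Fin d)) RP)
    (hQsupp : msupport Q ⊆ closedBall (0 : EuclideanSpace ℝ (Fin d)) RQ)
    (L : ℝ) (hL : 0 ≤ L)
    (fn : ℕ → EuclideanSpace ℝ (Fin d) → ℝ) (f : EuclideanSpace ℝ (Fin d) → ℝ)
    (hfnLip : ∀ n, LipschitzWith (Real.toNNReal L) (fn n))
    (hfLip : LipschitzWith (Real.toNNReal L) f)
    (gn : ℕ → EuclideanSpace ℝ (Fin d) → ℝ) (g : EuclideanSpace ℝ (Fin d) → ℝ)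
    (hgn : ∀ n, Differentiable ℝ (gn n)) (hg : Differentiable ℝ g)
    (hgnb : ∀ n, ∀ y ∈ msupport Q, ‖gradient (gn n) y‖ ≤ L)
    (hgb : ∀ y ∈ msupport Q, ‖gradient g y‖ ≤ L)
    (hgnm : ∀ n, Measurable (fun y => gradient (gn n) y))
    (hgm : Measurable (fun y => gradient g y))
    (hfu : TendstoUniformlyOn fn f atTop
      (closedBall (0 : EuclideanSpace ℝ (Fin d)) (max RP L)))
    (hgu : TendstoUniformlyOn (fun n y => gradient (gn n) y)
      (fun y => gradient g y) atTop (msupport Q)) :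
    Tendsto (fun n => VPQ P Q (fn n) (gn n)) atTop (nhds (VPQ P Q f g)) :=
  VPQ_continuous_general P Q RP RQ hPsupp hQsupp L fn f hfnLip hfLip gn g hgnb hgb hgnm hfu hgu
end
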